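/- For γ > 1/2 and ρ ≥ 1 with ργ < 1, the quantity σ²(γ,ρ) = γ² + γ²ρ(ρ - 2ργ² + 2γ)/(γρ-1)² + 2γ²/((ρ+γρ-1)(ρ+2γρ-2)) + 2γ/(2γ-1) - 2γρ(ργ² - ργ + 1)/((γρ-1)(ρ+γρ-1)) is strictly positive. -/

import Mathlib

/-!
Term by term: `γρ - 1 < 0` is the only denominator of indefinite sign, and the two numerators
of indefinite sign are `ρ + 2γ(1 - ργ)` and `1 - ργ(1 - γ)`, both positive when `ργ < 1`.
So the first four summands are positive and the subtracted one is negative.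
-/

lemma sub_two_mul_mul_sq_add_pos {γ ρ : ℝ} (hγ : 0 < γ) (hρ : 0 ≤ ρ) (hργ : ρ * γ < 1) :
    0 < ρ - 2 * ρ * γ ^ 2 + 2 * γ := by
  have key : ρ - 2 * ρ * γ ^ 2 + 2 * γ = ρ + 2 * γ * (1 - ρ * γ) := by ring
  rw [key]
  have : 0 < 2 * γ * (1 - ρ * γ) := by nlinarith
  linarith

lemma mul_sq_sub_mul_add_one_pos {γ ρ : ℝ} (hγ : 0 ≤ γ) (hρ : 0 ≤ ρ) (hργ : ρ * γ < 1) :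
    0 < ρ * γ ^ 2 - ρ * γ + 1 := by
  have hργ0 : 0 ≤ ρ * γ := mul_nonneg hρ hγ
  rcases le_total γ 1 with h | h
  · nlinarith [mul_nonneg hργ0 (sub_nonneg.2 h)]
  · nlinarith [mul_nonneg hργ0 (sub_nonneg.2 h)]

/-- Positivity of the asymptotic variance `σ²(γ,ρ)` of the robust distortion-premium
estimator, for `1/2 < γ`, `ρ ≥ 1`, `ργ < 1`. -/
theorem stmt16 (γ ρ : ℝ) (hγ : 1/2 < γ) (hρ : 1 ≤ ρ) (hργ : ρ * γ < 1) :
    0 < γ ^ 2 + γ ^ 2 * ρ * (ρ - 2 * ρ * γ ^ 2 + 2 * γ) / (γ * ρ - 1) ^ 2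
        + 2 * γ ^ 2 / ((ρ + γ * ρ - 1) * (ρ + 2 * γ * ρ - 2))
        + 2 * γ / (2 * γ - 1)
        - 2 * γ * ρ * (ρ * γ ^ 2 - ρ * γ + 1) / ((γ * ρ - 1) * (ρ + γ * ρ - 1)) := by
  have hγ0 : 0 < γ := by linarith
  have hρ0 : 0 < ρ := by linarith
  have hd1 : γ * ρ - 1 < 0 := by linarith [mul_comm γ ρ]
  have hd2 : 0 < ρ + γ * ρ - 1 := by nlinarith
  have hd3 : 0 < ρ + 2 * γ * ρ - 2 := by nlinarith
  have hd4 : 0 < 2 * γ - 1 := by linarith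
  have t2 : 0 < γ ^ 2 * ρ * (ρ - 2 * ρ * γ ^ 2 + 2 * γ) / (γ * ρ - 1) ^ 2 :=
    div_pos (mul_pos (by positivity) (sub_two_mul_mul_sq_add_pos hγ0 hρ0.le hργ))
      (sq_pos_of_neg hd1)
  have t3 : 0 < 2 * γ ^ 2 / ((ρ + γ * ρ - 1) * (ρ + 2 * γ * ρ - 2)) :=
    div_pos (by positivity) (mul_pos hd2 hd3)
  have t4 : 0 < 2 * γ / (2 * γ - 1) := div_pos (by positivity) hd4
  have t5 : 2 * γ * ρ * (ρ * γ ^ 2 - ρ * γ + 1) / ((γ * ρ - 1) * (ρ + γ * ρ - 1)) < 0 :=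
    div_neg_of_pos_of_neg (mul_pos (by positivity) (mul_sq_sub_mul_add_one_pos hγ0.le hρ0.le hργ))
      (mul_neg_of_neg_of_pos hd1 hd2)
  linarith [pow_pos hγ0 2]
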